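/- arXiv:2403.10540 — 5 statements merged into one kernel-verified Lean document; each statement's English description precedes it below -/
import Mathlib

section
/- Let C, R_A, R_B > 0 and V_DD > 0, and let 0 ≤ Δ < log(2)·C·R_A. Define V₁(t) = V_DD · exp(−t/(C·R_A)) for t ∈ [0,Δ], and V₂(t) = V₁(Δ) · exp(−(1/(C·R_A) + 1/(C·R_B))·t) for t ≥ 0. Then the total time δ (measured from time 0) at which the concatenated trajectory first reaches V_DD/2 satisfies δ = (log(2)·C·R_A·R_B − Δ·R_B)/(R_A + R_B) + Δ. Moreover, if Δ ≥ log(2)·C·R_A, the first trajectory V₁ already crosses V_DD/2 at time log(2)·C·R_A ≤ Δ. -/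
/-! Both pieces of the trajectory are `V_DD · exp (-x)`, so reaching `V_DD/2` means that the
exponent `x` equals `log 2`. On `[0, Δ]` this happens only at `log 2 · C · R_A > Δ`; after `Δ`
the exponent is a strictly increasing affine function of `t`, equal to `log 2` exactly at `δ`. -/

open Real

/-- The paper's `δ↓_{M,+}(Δ)` with `δ_min = 0`. -/
noncomputable def misFallDelay (C RA RB Δ : ℝ) : ℝ :=
  (log 2 * C * RA * RB - Δ * RB) / (RA + RB) + Δ

lemma mul_exp_neg_eq_half_iff {V x : ℝ} (hV : V ≠ 0) : V * exp (-x) = V / 2 ↔ x = log 2 := by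
  rw [show V / 2 = V * exp (-log 2) by rw [exp_neg, exp_log two_pos]; ring,
    mul_right_inj' hV, exp_eq_exp, neg_inj]

section Delay

variable {C RA RB Δ : ℝ}

lemma lt_misFallDelay (hRA : 0 < RA) (hRB : 0 < RB)
    (hΔ : Δ < log 2 * C * RA) : Δ < misFallDelay C RA RB Δ := by
  have : 0 < (log 2 * C * RA * RB - Δ * RB) / (RA + RB) := by
    apply div_pos _ (by positivity)
    nlinarith
  unfold misFallDelay
  linarith

lemma misFall_exponent_eq_log_two_iff (hC : 0 < C) (hRA : 0 < RA) (hRB : 0 < RB) {t : ℝ} :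
    Δ / (C * RA) + (1 / (C * RA) + 1 / (C * RB)) * (t - Δ) = log 2 ↔
      t = misFallDelay C RA RB Δ := by
  unfold misFallDelay
  constructor <;> intro h
  · field_simp at h ⊢
    linarith
  · subst h
    field_simp
    ring

end Delay

/-- MIS falling-output delay of a two-input NOR gate (`δ_min = 0`): with a first discharge
path `R_A` switched on at time `0` and a second parallel path `R_B` switched on at time
`Δ`, the concatenated trajectory first reaches `V_DD/2` at
`δ = (log 2 · C · R_A · R_B − Δ · R_B)/(R_A + R_B) + Δ` when `0 ≤ Δ < log 2 · C · R_A`;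
whereas if `Δ ≥ log 2 · C · R_A` the first trajectory alone crosses `V_DD/2` already at
time `log 2 · C · R_A ≤ Δ`. -/
theorem stmt_2 (C RA RB VDD : ℝ) (hC : 0 < C) (hRA : 0 < RA) (hRB : 0 < RB)
    (hV : 0 < VDD) (Δ : ℝ) (hΔ : 0 ≤ Δ) :
    -- the concatenated trajectory
    (∀ V : ℝ → ℝ,
      (∀ t, 0 ≤ t → t ≤ Δ → V t = VDD * Real.exp (-t / (C * RA))) →
      (∀ t, Δ < t → V t =
        (VDD * Real.exp (-Δ / (C * RA))) *
          Real.exp (-(1 / (C * RA) + 1 / (C * RB)) * (t - Δ))) →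
      Δ < Real.log 2 * C * RA →
      IsLeast {t : ℝ | 0 ≤ t ∧ V t = VDD / 2}
        ((Real.log 2 * C * RA * RB - Δ * RB) / (RA + RB) + Δ)) ∧
    (Real.log 2 * C * RA ≤ Δ →
      VDD * Real.exp (-(Real.log 2 * C * RA) / (C * RA)) = VDD / 2 ∧
      Real.log 2 * C * RA ≤ Δ) := by
  have hτ : C * RA ≠ 0 := by positivity
  have first_eq_half_iff (t : ℝ) :
      VDD * exp (-t / (C * RA)) = VDD / 2 ↔ t = log 2 * C * RA := by
    rw [neg_div, mul_exp_neg_eq_half_iff hV.ne', div_eq_iff hτ, mul_assoc]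
  refine ⟨fun V hV₁ hV₂ hΔlt => ?_, fun h => ⟨(first_eq_half_iff _).2 rfl, h⟩⟩
  have second_eq_half_iff (t : ℝ) (ht : Δ < t) :
      V t = VDD / 2 ↔ t = misFallDelay C RA RB Δ := by
    rw [hV₂ t ht, mul_assoc, ← exp_add, ← misFall_exponent_eq_log_two_iff hC hRA hRB,
      ← mul_exp_neg_eq_half_iff hV.ne']
    ring_nf
  have hδ := lt_misFallDelay hRA hRB hΔlt
  refine ⟨⟨hΔ.trans hδ.le, (second_eq_half_iff _ hδ).2 rfl⟩, fun t ⟨ht₀, ht⟩ => ?_⟩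
  rcases le_or_gt t Δ with htΔ | htΔ
  · rw [hV₁ t ht₀ htΔ, first_eq_half_iff] at ht
    linarith
  · exact ((second_eq_half_iff t htΔ).1 ht).ge
end

section
/- Let C > 0, δ_min ≥ 0, and let δ₀, δ₊, δ₋ be real with δ₊ > δ₀ > δ_min and δ₋ > δ₀. Set ε = √((δ₊ − δ₀)·(δ₋ − δ₀)), R₅ = (δ₀ − δ_min − ε)/(log(2)·C), R_A = (δ₊ − δ₀ + ε)/(log(2)·C), R_B = (δ₋ − δ₀ + ε)/(log(2)·C), and assume R₅ ≥ 0. Then R_A, R_B > 0 and the following three matching equations hold: (i) δ₀ − δ_min = log(2)·C·(R₅ + R_A·R_B/(R_A + R_B)); (ii) δ₊ − δ_min = log(2)·C·(R₅ + R_A); (iii) δ₋ − δ_min = log(2)·C·(R₅ + R_B). -/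
/-! Write `a = δ₊ - δ₀`, `b = δ₋ - δ₀` and `L = log 2 · C`, so that `ε = √(ab)` and
`L R_A = a + ε`, `L R_B = b + ε`. Since `ε² = ab`, the product `(a + ε)(b + ε)` factors as
`ε (a + b + 2ε)`, i.e. `ε` times the sum; hence the parallel resistance `R_A ‖ R_B` is
`ε / L`, and all three matching equations become linear identities in `ε`. -/

theorem mul_div_add_eq_of_mul_self_eq {K : Type*} [Field K] {a b ε : K}
    (hε : ε * ε = a * b) (h : a + b + 2 * ε ≠ 0) :
    (a + ε) * (b + ε) / ((a + ε) + (b + ε)) = ε := by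
  rw [div_eq_iff (by rwa [show a + ε + (b + ε) = a + b + 2 * ε by ring])]
  linear_combination -hε

theorem div_mul_div_div_div_add_div {K : Type*} [Field K] (x y L : K) :
    x / L * (y / L) / (x / L + y / L) = x * y / (x + y) / L := by
  rcases eq_or_ne L 0 with rfl | hL
  · simp
  · rw [← add_div, div_mul_div_comm, ← div_div, div_div_div_cancel_right₀ hL, div_right_comm]

theorem stmt_7_general (C δmin δ₀ δp δm : ℝ) (hC : 0 < C)
    (h1 : δ₀ < δp) (h3 : δ₀ < δm) :
    let ε : ℝ := Real.sqrt ((δp - δ₀) * (δm - δ₀))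
    let R₅ : ℝ := (δ₀ - δmin - ε) / (Real.log 2 * C)
    let RA : ℝ := (δp - δ₀ + ε) / (Real.log 2 * C)
    let RB : ℝ := (δm - δ₀ + ε) / (Real.log 2 * C)
    0 ≤ R₅ →
      (0 < RA ∧ 0 < RB) ∧
      δ₀ - δmin = Real.log 2 * C * (R₅ + RA * RB / (RA + RB)) ∧
      δp - δmin = Real.log 2 * C * (R₅ + RA) ∧
      δm - δmin = Real.log 2 * C * (R₅ + RB) := by
  intro ε R₅ RA RB _
  have hL : 0 < Real.log 2 * C := mul_pos (Real.log_pos one_lt_two) hC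
  have hab : 0 < (δp - δ₀) * (δm - δ₀) := mul_pos (by linarith) (by linarith)
  have hε : 0 < ε := Real.sqrt_pos.mpr hab
  have hRA_RB : RA * RB / (RA + RB) = ε / (Real.log 2 * C) := by
    rw [div_mul_div_div_div_add_div, mul_div_add_eq_of_mul_self_eq
      (Real.mul_self_sqrt hab.le) (by linarith)]
  refine ⟨⟨div_pos (by linarith) hL, div_pos (by linarith) hL⟩, ?_, ?_, ?_⟩
  · rw [hRA_RB, ← add_div, mul_div_cancel₀ _ hL.ne']
    ring
  all_goals
    rw [← add_div, mul_div_cancel₀ _ hL.ne']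
    ring

/-- Model parametrization for interconnect-augmented NOR gates (falling-output case):
the chosen `R₅`, `R_A`, `R_B` satisfy the three matching equations. -/
theorem stmt_7 (C δmin δ₀ δp δm : ℝ) (hC : 0 < C) (hδmin : 0 ≤ δmin)
    (h1 : δ₀ < δp) (h2 : δmin < δ₀) (h3 : δ₀ < δm) :
    let ε : ℝ := Real.sqrt ((δp - δ₀) * (δm - δ₀))
    let R₅ : ℝ := (δ₀ - δmin - ε) / (Real.log 2 * C)
    let RA : ℝ := (δp - δ₀ + ε) / (Real.log 2 * C)
    let RB : ℝ := (δm - δ₀ + ε) / (Real.log 2 * C)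
    0 ≤ R₅ →
      (0 < RA ∧ 0 < RB) ∧
      δ₀ - δmin = Real.log 2 * C * (R₅ + RA * RB / (RA + RB)) ∧
      δp - δmin = Real.log 2 * C * (R₅ + RA) ∧
      δm - δmin = Real.log 2 * C * (R₅ + RB) :=
  stmt_7_general C δmin δ₀ δp δm hC h1 h3
end

section
/- Let C, R, R₅ > 0 and t > 0 with t > C·(R₅ + 2R)·log(2). Define A(t) = −2R·(t − C(R₅+2R)log(2)) / (W₋₁((C(R₅+2R)log(2)/t − 1)·e^{C(R₅+2R)log(2)/t − 1}) + 1 − C(R₅+2R)log(2)/t), where W₋₁ is the non-principal branch of the Lambert W function. Then α := A(t) > 0 and α satisfies the threshold equation e^{−2Rt/α}·(1 + 2Rt/α) = 2^{−2RC(R₅+2R)/α}. -/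
/-- The parametrization function `A(t)` of the interconnect-augmented NOR gate: with
`K = C(R₅+2R)·log 2 < t` and `w = W₋₁((K/t − 1)·e^{K/t − 1})` (characterized by
`w·e^w = (K/t − 1)·e^{K/t − 1}` and `w ≤ −1`), the value
`α = −2R(t − K)/(w + 1 − K/t)` is positive and satisfies the threshold equation
`e^{−2Rt/α}·(1 + 2Rt/α) = 2^{−2RC(R₅+2R)/α}`. -/
theorem stmt_12 (C R R₅ t : ℝ) (hC : 0 < C) (hR : 0 < R) (hR₅ : 0 < R₅)
    (ht : 0 < t) (htK : C * (R₅ + 2 * R) * Real.log 2 < t)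
    (w : ℝ)
    (hw : w * Real.exp w =
      (C * (R₅ + 2 * R) * Real.log 2 / t - 1) *
        Real.exp (C * (R₅ + 2 * R) * Real.log 2 / t - 1))
    (hw1 : w ≤ -1) :
    let α : ℝ := -2 * R * (t - C * (R₅ + 2 * R) * Real.log 2) /
      (w + 1 - C * (R₅ + 2 * R) * Real.log 2 / t)
    0 < α ∧
    Real.exp (-(2 * R * t) / α) * (1 + 2 * R * t / α) =
      (2 : ℝ) ^ (-(2 * R * C * (R₅ + 2 * R)) / α) := by
  intro α
  have hlog2 : 0 < Real.log 2 := Real.log_pos (by norm_num)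
  set K : ℝ := C * (R₅ + 2 * R) * Real.log 2 with hK
  have hKpos : 0 < K := by positivity
  have htKpos : 0 < t - K := by linarith
  have hk0 : 0 < K / t := div_pos hKpos ht
  have hk : K / t < 1 := (div_lt_one ht).2 htK
  have hk1 : K / t - 1 ≠ 0 := by linarith
  have hD : w + 1 - K / t < 0 := by linarith
  have hw0 : w ≠ 0 := by linarith
  have hαe : α = -2 * R * (t - K) / (w + 1 - K / t) := rfl
  have hKval : K = C * (R₅ + 2 * R) * Real.log 2 := hK
  clear_value α K
  have hα : 0 < α := by
    rw [hαe]
    apply div_pos_of_neg_of_neg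
    · nlinarith
    · exact hD
  refine ⟨hα, ?_⟩
  have hexp : Real.exp (K / t - 1 - w) = w / (K / t - 1) := by
    rw [Real.exp_sub, div_eq_div_iff (Real.exp_pos w).ne' hk1]
    linear_combination -hw
  have hexp2 : Real.exp (w + 1 - K / t) = (K / t - 1) / w := by
    have h2 : Real.exp (w + 1 - K / t) = (Real.exp (K / t - 1 - w))⁻¹ := by
      rw [← Real.exp_neg]; ring_nf
    rw [h2, hexp, inv_div]
  have ha : 2 * R * t / α = -t * (w + 1 - K / t) / (t - K) := by
    rw [hαe]
    field_simp
  have h1a : 1 + 2 * R * t / α = w / (K / t - 1) := by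
    have hnt : (-t + K : ℝ) ≠ 0 := by intro h; linarith
    rw [ha]
    field_simp [ht.ne', htKpos.ne', hnt]
    linear_combination (t * w) * mul_inv_cancel₀ hnt
  have hsplit : -(2 * R * t) / α = -(2 * R * K) / α + (w + 1 - K / t) := by
    rw [hαe]
    field_simp
    ring
  have hrhs : (2 : ℝ) ^ (-(2 * R * C * (R₅ + 2 * R)) / α) =
      Real.exp (-(2 * R * K) / α) := by
    rw [Real.rpow_def_of_pos (by norm_num : (0:ℝ) < 2)]
    congr 1
    rw [hKval]
    ring
  have hcancel : (K / t - 1) / w * (w / (K / t - 1)) = 1 := by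
    field_simp [ht.ne', hw0, sub_ne_zero.mpr (ne_of_lt htK)]
  rw [hrhs, hsplit, Real.exp_add, h1a, hexp2, mul_assoc, hcancel, mul_one]
end

section
/- Let C, R_A, R_B > 0, R₅ ≥ 0, V_DD > 0, and 0 ≤ Δ. Define C₁ = C(R₅+R_A)/R_A and C₂ = C(R₅(R_A+R_B)+R_A·R_B)/(R_A·R_B), and the concatenated trajectory V(t) = V_DD·e^{−t/(C₁R_A)} for t ∈ [0,Δ] and V(t) = V(Δ)·e^{−(1/(C₂R_A)+1/(C₂R_B))·(t−Δ)} for t > Δ. If Δ < log(2)·C₁·R_A, then the first time δ at which V(δ) = V_DD/2 satisfies δ = (log(2)·C₂·R_A·R_B − (C₂/C₁)·Δ·R_B)/(R_A + R_B) + Δ. -/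
/-!
Each phase is an exponential decay, so the trajectory is strictly decreasing. The first phase
ends above `V_DD / 2` because `Δ` is shorter than its halving time `log 2 · C₁ R_A`; the second
phase then solves `Δ / (C₁ R_A) + k (t - Δ) = log 2` with `k = (R_A + R_B) / (C₂ R_A R_B)`, and
solving for `t` gives the stated delay.
-/

open Real

lemma exp_neg_log_two : exp (-log 2) = 1 / 2 := by
  rw [exp_neg, exp_log two_pos, one_div]

lemma exp_neg_eq_half_iff {x : ℝ} : exp (-x) = 1 / 2 ↔ x = log 2 := by
  rw [← exp_neg_log_two, exp_eq_exp, neg_inj]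

lemma one_half_lt_exp_neg {x : ℝ} (hx : x < log 2) : 1 / 2 < exp (-x) := by
  rw [← exp_neg_log_two]
  exact exp_lt_exp.mpr (neg_lt_neg hx)

section TwoPhaseDecay

variable {V : ℝ → ℝ} {V₀ τ b Δ : ℝ}

lemma pos_of_lt_log_two_mul (hΔ : 0 ≤ Δ) (hτ : Δ < log 2 * τ) : 0 < τ :=
  pos_of_mul_pos_right (hΔ.trans_lt hτ) (log_pos one_lt_two).le

lemma half_lt_of_first_phase (hV₀ : 0 < V₀) (hΔ : 0 ≤ Δ) (hτ : Δ < log 2 * τ)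
    (hfirst : ∀ t, 0 ≤ t → t ≤ Δ → V t = V₀ * exp (-t / τ))
    {t : ℝ} (ht₀ : 0 ≤ t) (htΔ : t ≤ Δ) : V₀ / 2 < V t := by
  have hτ_pos : 0 < τ := pos_of_lt_log_two_mul hΔ hτ
  have ht : t / τ < log 2 := (div_lt_iff₀ hτ_pos).mpr (htΔ.trans_lt hτ)
  rw [hfirst t ht₀ htΔ, neg_div]
  linarith [mul_lt_mul_of_pos_left (one_half_lt_exp_neg ht) hV₀]

lemma eq_half_iff_of_second_phase (hV₀ : 0 < V₀) (hb : 0 < b)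
    (hsecond : ∀ t, Δ < t → V t = V₀ * exp (-Δ / τ) * exp (-b * (t - Δ)))
    {t : ℝ} (ht : Δ < t) : V t = V₀ / 2 ↔ t = Δ + (log 2 - Δ / τ) / b := by
  have hexp : V t = V₀ * exp (-(Δ / τ + b * (t - Δ))) := by
    rw [hsecond t ht, mul_assoc, ← exp_add]
    ring_nf
  rw [hexp, show V₀ / 2 = V₀ * (1 / 2) by ring, mul_right_inj' hV₀.ne', exp_neg_eq_half_iff]
  constructor <;> intro h
  · field_simp; linarith
  · rw [h]; field_simp; ring

theorem isLeast_eq_half_of_two_phase_decay (hV₀ : 0 < V₀) (hb : 0 < b) (hΔ : 0 ≤ Δ)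
    (hτ : Δ < log 2 * τ)
    (hfirst : ∀ t, 0 ≤ t → t ≤ Δ → V t = V₀ * exp (-t / τ))
    (hsecond : ∀ t, Δ < t → V t = V₀ * exp (-Δ / τ) * exp (-b * (t - Δ))) :
    IsLeast {t | 0 ≤ t ∧ V t = V₀ / 2} (Δ + (log 2 - Δ / τ) / b) := by
  have hτ_pos : 0 < τ := pos_of_lt_log_two_mul hΔ hτ
  have hδ : Δ < Δ + (log 2 - Δ / τ) / b :=
    lt_add_of_pos_right Δ (div_pos (by rwa [sub_pos, div_lt_iff₀ hτ_pos]) hb)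
  refine ⟨⟨hΔ.trans hδ.le, (eq_half_iff_of_second_phase hV₀ hb hsecond hδ).mpr rfl⟩, ?_⟩
  rintro t ⟨ht₀, hVt⟩
  rcases le_or_gt t Δ with htΔ | htΔ
  · exact absurd hVt (half_lt_of_first_phase hV₀ hΔ hτ hfirst ht₀ htΔ).ne'
  · exact ((eq_half_iff_of_second_phase hV₀ hb hsecond htΔ).mp hVt).ge

end TwoPhaseDecay

/-- Interconnect-augmented MIS falling delay formula (`δ_min = 0`): with effective
capacitances `C₁` and `C₂`, if `Δ < log 2 · C₁ · R_A` then the first time the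
concatenated trajectory reaches `V_DD/2` is
`δ = (log 2 · C₂ · R_A · R_B − (C₂/C₁)·Δ·R_B)/(R_A + R_B) + Δ`. -/
theorem stmt_13 (C RA RB R₅ VDD Δ : ℝ) (hC : 0 < C) (hRA : 0 < RA) (hRB : 0 < RB)
    (hR₅ : 0 ≤ R₅) (hV : 0 < VDD) (hΔ : 0 ≤ Δ) :
    let C₁ : ℝ := C * (R₅ + RA) / RA
    let C₂ : ℝ := C * (R₅ * (RA + RB) + RA * RB) / (RA * RB)
    ∀ V : ℝ → ℝ,
      (∀ t, 0 ≤ t → t ≤ Δ → V t = VDD * Real.exp (-t / (C₁ * RA))) →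
      (∀ t, Δ < t → V t =
        (VDD * Real.exp (-Δ / (C₁ * RA))) *
          Real.exp (-(1 / (C₂ * RA) + 1 / (C₂ * RB)) * (t - Δ))) →
      Δ < Real.log 2 * C₁ * RA →
      IsLeast {t : ℝ | 0 ≤ t ∧ V t = VDD / 2}
        ((Real.log 2 * C₂ * RA * RB - (C₂ / C₁) * Δ * RB) / (RA + RB) + Δ) := by
  intro C₁ C₂ V hfirst hsecond hlt
  have hC₁ : 0 < C₁ := by positivity
  have hC₂ : 0 < C₂ := by positivity
  have hdelay : (log 2 * C₂ * RA * RB - C₂ / C₁ * Δ * RB) / (RA + RB) + Δ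
      = Δ + (log 2 - Δ / (C₁ * RA)) / (1 / (C₂ * RA) + 1 / (C₂ * RB)) := by
    field_simp
    ring
  rw [hdelay]
  exact isLeast_eq_half_of_two_phase_decay hV (by positivity) hΔ (by rwa [← mul_assoc])
    hfirst hsecond
end

section
/- Let α₁, α₂, R > 0, Δ > 0, C > 0, V_DD > 0, and let a, d, χ, c', A be as follows: a = (α₁+α₂)/(2R), d = a + Δ, c' = α₂Δ/(2R), χ = d² − 4c' (assumed > 0), A = (α₂Δ − aR(d − √χ))/(2R√χ). Then the function V(t) = V_DD + (V_Δ − V_DD)·e^{−t/(2RC)}·(1 + 2t/(d+√χ))^{(−A+a)/(2RC)}·(1 + 2t/(d−√χ))^{A/(2RC)}, for any initial value V_Δ, satisfies V(0) = V_Δ and solves dV/dt = −V(t)/(C·R_g(t)) + U(t) on (0,∞), where 1/R_g(t) = 1/(α₁/(t+Δ) + α₂/t + 2R) and U(t) = V_DD·t·(t+Δ)/(C·(2Rt² + (α₁+α₂+2ΔR)t + α₂Δ)). -/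
/-!
Write `s = √χ` and `P(t) = 2Rt² + (α₁+α₂+2ΔR)t + α₂Δ = 2R(t² + dt + c')`. Since `s² = d² − 4c'`,
`P(t) = R(d+s+2t)(d−s+2t)/2`, and `A` is exactly the residue that makes the logarithmic
derivative of the envelope `e^{−t/(2RC)}(1 + 2t/(d+s))^{(a−A)/(2RC)}(1 + 2t/(d−s))^{A/(2RC)}`
equal, by partial fractions, to `−t(t+Δ)/(C·P(t))`. On the other hand `α₁/(t+Δ) + α₂/t + 2R = P(t)/(t(t+Δ))`, so the
right-hand side of the equation is `(V_DD − V)·t(t+Δ)/(C·P(t))`, and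
`V = V_DD + (V_Δ − V_DD)·envelope` solves it.
-/

open Real

noncomputable def envelope (τ r₁ p₁ r₂ p₂ t : ℝ) : ℝ :=
  exp (-t / τ) * (1 + 2 * t / r₁) ^ p₁ * (1 + 2 * t / r₂) ^ p₂

theorem hasDerivAt_one_add_two_mul_div_rpow {r p t : ℝ} (hr : r ≠ 0) (hb : 1 + 2 * t / r ≠ 0) :
    HasDerivAt (fun u => (1 + 2 * u / r) ^ p) (2 * p / (r + 2 * t) * (1 + 2 * t / r) ^ p) t := by
  have hbase : HasDerivAt (fun u => 1 + 2 * u / r) (2 / r) t := by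
    simpa using (((hasDerivAt_id t).const_mul 2).div_const r).const_add 1
  have hrt : r + 2 * t ≠ 0 := by
    contrapose! hb
    field_simp
    linarith
  refine (hbase.rpow_const (Or.inl hb)).congr_deriv ?_
  rw [rpow_sub_one hb]
  field_simp

theorem hasDerivAt_envelope {τ r₁ p₁ r₂ p₂ t : ℝ} (hr₁ : r₁ ≠ 0) (hr₂ : r₂ ≠ 0)
    (hb₁ : 1 + 2 * t / r₁ ≠ 0) (hb₂ : 1 + 2 * t / r₂ ≠ 0) :
    HasDerivAt (envelope τ r₁ p₁ r₂ p₂)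
      ((-1 / τ + 2 * p₁ / (r₁ + 2 * t) + 2 * p₂ / (r₂ + 2 * t)) * envelope τ r₁ p₁ r₂ p₂ t) t := by
  have hexp : HasDerivAt (fun u => exp (-u / τ)) (exp (-t / τ) * (-1 / τ)) t := by
    simpa using ((hasDerivAt_id t).neg.div_const τ).exp
  refine ((hexp.mul (hasDerivAt_one_add_two_mul_div_rpow hr₁ hb₁)).mul
    (hasDerivAt_one_add_two_mul_div_rpow hr₂ hb₂)).congr_deriv ?_
  simp only [envelope, Pi.mul_apply]
  ring

theorem neg_one_add_div_add_div_eq {a A d s Δ t : ℝ} (hd : d = a + Δ)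
    (hA : 4 * s * A = d ^ 2 - s ^ 2 - 2 * a * (d - s))
    (hx : d + s + 2 * t ≠ 0) (hy : d - s + 2 * t ≠ 0) :
    -1 + 2 * (a - A) / (d + s + 2 * t) + 2 * A / (d - s + 2 * t) =
      -(4 * t * (t + Δ)) / ((d + s + 2 * t) * (d - s + 2 * t)) := by
  field_simp
  linear_combination hA - 4 * t * hd

section NOR

variable {α₁ α₂ R Δ a d c' s A : ℝ}

theorem quadratic_eq_factored (hR : R ≠ 0) (ha : a = (α₁ + α₂) / (2 * R)) (hd : d = a + Δ)
    (hc' : c' = α₂ * Δ / (2 * R)) (hs : s ^ 2 = d ^ 2 - 4 * c') (t : ℝ) :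
    2 * R * t ^ 2 + (α₁ + α₂ + 2 * Δ * R) * t + α₂ * Δ =
      R * ((d + s + 2 * t) * (d - s + 2 * t)) / 2 := by
  have ha' : 2 * R * a = α₁ + α₂ := by rw [ha]; field_simp
  have hc'' : 2 * R * c' = α₂ * Δ := by rw [hc']; field_simp
  linear_combination (-t) * ha' + (-2 * R * t) * hd - hc'' + (R / 2) * hs

theorem four_mul_residue_eq (hR : R ≠ 0) (hs₀ : s ≠ 0) (hc' : c' = α₂ * Δ / (2 * R))
    (hs : s ^ 2 = d ^ 2 - 4 * c') (hA : A = (α₂ * Δ - a * R * (d - s)) / (2 * R * s)) :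
    4 * s * A = d ^ 2 - s ^ 2 - 2 * a * (d - s) := by
  have hA' : 2 * R * s * A = α₂ * Δ - a * R * (d - s) := by rw [hA]; field_simp
  have hc'' : 2 * R * c' = α₂ * Δ := by rw [hc']; field_simp
  refine mul_left_cancel₀ hR ?_
  linear_combination 2 * hA' - 2 * hc'' + R * hs

theorem series_resistance_eq_div {t : ℝ} (ht : t ≠ 0) (htΔ : t + Δ ≠ 0) :
    α₁ / (t + Δ) + α₂ / t + 2 * R =
      (2 * R * t ^ 2 + (α₁ + α₂ + 2 * Δ * R) * t + α₂ * Δ) / (t * (t + Δ)) := by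
  field_simp
  ring

end NOR

theorem stmt_16_general (α₁ α₂ R Δ C VDD VΔ : ℝ)
    (hα₁ : 0 < α₁) (hα₂ : 0 < α₂) (hR : 0 < R) (hΔ : 0 < Δ) (hC : 0 < C)
    (a d c' χ A : ℝ)
    (ha : a = (α₁ + α₂) / (2 * R)) (hd : d = a + Δ) (hc' : c' = α₂ * Δ / (2 * R))
    (hχ : χ = d ^ 2 - 4 * c') (hχpos : 0 < χ)
    (hA : A = (α₂ * Δ - a * R * (d - Real.sqrt χ)) / (2 * R * Real.sqrt χ)) :
    let V : ℝ → ℝ := fun t =>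
      VDD + (VΔ - VDD) * Real.exp (-t / (2 * R * C)) *
        (1 + 2 * t / (d + Real.sqrt χ)) ^ ((-A + a) / (2 * R * C)) *
        (1 + 2 * t / (d - Real.sqrt χ)) ^ (A / (2 * R * C))
    V 0 = VΔ ∧
    ∀ t : ℝ, 0 < t →
      HasDerivAt V
        (-(V t) / (C * (α₁ / (t + Δ) + α₂ / t + 2 * R)) +
          VDD * t * (t + Δ) /
            (C * (2 * R * t ^ 2 + (α₁ + α₂ + 2 * Δ * R) * t + α₂ * Δ))) t := by
  intro V
  set s := √χ
  have hs₀ : 0 < s := sqrt_pos.2 hχpos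
  have hs : s ^ 2 = d ^ 2 - 4 * c' := by rw [sq_sqrt hχpos.le, hχ]
  have hc'₀ : 0 < c' := by rw [hc']; positivity
  have hd₀ : 0 < d := by rw [hd, ha]; positivity
  have hds : 0 < d - s := by nlinarith
  have hV_eq : V = fun u => VDD + (VΔ - VDD) *
      envelope (2 * R * C) (d + s) ((-A + a) / (2 * R * C)) (d - s) (A / (2 * R * C)) u := by
    funext u
    simp only [V, envelope]
    ring
  refine ⟨by simp [V], fun t ht => ?_⟩
  have hx : 0 < d + s + 2 * t := by linarith
  have hy : 0 < d - s + 2 * t := by linarith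
  have hlog := neg_one_add_div_add_div_eq hd
    (four_mul_residue_eq hR.ne' hs₀.ne' hc' hs hA) hx.ne' hy.ne'
  rw [hV_eq, series_resistance_eq_div ht.ne' (by linarith),
    quadratic_eq_factored hR.ne' ha hd hc' hs]
  refine (((hasDerivAt_envelope (by linarith) (by linarith) (by positivity)
    (by positivity)).const_mul (VΔ - VDD)).const_add VDD).congr_deriv ?_
  have hg : -1 / (2 * R * C) + 2 * ((-A + a) / (2 * R * C)) / (d + s + 2 * t) +
      2 * (A / (2 * R * C)) / (d - s + 2 * t) =
      -(4 * t * (t + Δ)) / ((d + s + 2 * t) * (d - s + 2 * t)) / (2 * R * C) := by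
    rw [← hlog]; ring
  rw [hg]
  beta_reduce
  generalize envelope _ _ _ _ _ t = E
  field_simp
  ring

/-- The explicit trajectory for the mode `T↓↓₊` of the NOR gate: the function
`V(t) = V_DD + (V_Δ − V_DD)·e^{−t/(2RC)}·(1 + 2t/(d+√χ))^{(−A+a)/(2RC)}·(1 + 2t/(d−√χ))^{A/(2RC)}`
satisfies `V 0 = V_Δ` and solves `dV/dt = −V/(C·R_g t) + U t` on `(0,∞)`, where
`1/R_g t = 1/(α₁/(t+Δ) + α₂/t + 2R)` and
`U t = V_DD·t·(t+Δ)/(C·(2Rt² + (α₁+α₂+2ΔR)t + α₂Δ))`. -/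
theorem stmt_16 (α₁ α₂ R Δ C VDD VΔ : ℝ)
    (hα₁ : 0 < α₁) (hα₂ : 0 < α₂) (hR : 0 < R) (hΔ : 0 < Δ) (hC : 0 < C)
    (hV : 0 < VDD)
    (a d c' χ A : ℝ)
    (ha : a = (α₁ + α₂) / (2 * R)) (hd : d = a + Δ) (hc' : c' = α₂ * Δ / (2 * R))
    (hχ : χ = d ^ 2 - 4 * c') (hχpos : 0 < χ)
    (hA : A = (α₂ * Δ - a * R * (d - Real.sqrt χ)) / (2 * R * Real.sqrt χ)) :
    let V : ℝ → ℝ := fun t =>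
      VDD + (VΔ - VDD) * Real.exp (-t / (2 * R * C)) *
        (1 + 2 * t / (d + Real.sqrt χ)) ^ ((-A + a) / (2 * R * C)) *
        (1 + 2 * t / (d - Real.sqrt χ)) ^ (A / (2 * R * C))
    V 0 = VΔ ∧
    ∀ t : ℝ, 0 < t →
      HasDerivAt V
        (-(V t) / (C * (α₁ / (t + Δ) + α₂ / t + 2 * R)) +
          VDD * t * (t + Δ) /
            (C * (2 * R * t ^ 2 + (α₁ + α₂ + 2 * Δ * R) * t + α₂ * Δ))) t :=
  stmt_16_general α₁ α₂ R Δ C VDD VΔ hα₁ hα₂ hR hΔ hC a d c' χ A ha hd hc' hχ hχpos hA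
end
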